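/- arXiv:0704.3894 — 2 statements merged into one kernel-verified Lean document; each statement's English description precedes it below -/
import Mathlib

section
/- Suppose there exists at least one multi-symplectic alternating k-form on ℝ^n. Then every stable k-form on ℝ^n is multi-symplectic. -/
noncomputable section

/-- The wedge product `f 0 ∧ ⋯ ∧ f (k-1)` of `k` covectors, as an alternating `k`-form:
`(v₁,…,v_k) ↦ det (f i (v j))`. -/
def covectorWedge {V : Type*} [AddCommGroup V] [Module ℝ V] {k : ℕ}
    (f : Fin k → Module.Dual ℝ V) : V [⋀^Fin k]→ₗ[ℝ] ℝ :=
  (Matrix.detRowAlternating : (Fin k → ℝ) [⋀^Fin k]→ₗ[ℝ] ℝ).compLinearMap (LinearMap.pi f)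

/-- The rank `ρ(γ)` of a `k`-form `γ`: the minimal dimension of a subspace `W ⊆ V*` such that
`γ` lies in the image of `Λ^k W`, i.e. in the span of wedge products of covectors from `W`. -/
def formRank {V : Type*} [AddCommGroup V] [Module ℝ V] {k : ℕ}
    (γ : V [⋀^Fin k]→ₗ[ℝ] ℝ) : ℕ :=
  sInf {d : ℕ | ∃ W : Submodule ℝ (Module.Dual ℝ V), Module.finrank ℝ W = d ∧
    γ ∈ Submodule.span ℝ
      {φ : V [⋀^Fin k]→ₗ[ℝ] ℝ | ∃ f : Fin k → Module.Dual ℝ V,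
        (∀ i, f i ∈ W) ∧ φ = covectorWedge f}}

/-- A `(k+1)`-form `γ` is multi-symplectic if the linear map
`I_γ : v ↦ v ⌟ γ` (insertion in the first slot) is injective. -/
def MultiSymplectic {V : Type*} [AddCommGroup V] [Module ℝ V] {k : ℕ}
    (γ : V [⋀^Fin (k + 1)]→ₗ[ℝ] ℝ) : Prop :=
  Function.Injective fun v => γ.curryLeft v

/-- The natural topology on the finite-dimensional space of alternating `k`-forms on `ℝⁿ`
(the topology induced by evaluation; it coincides with the standard vector space topology). -/
instance altFormTopology (n k : ℕ) :
    TopologicalSpace ((Fin n → ℝ) [⋀^Fin k]→ₗ[ℝ] ℝ) :=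
  TopologicalSpace.induced (fun φ => (⇑φ : (Fin k → Fin n → ℝ) → ℝ)) inferInstance

/-- The pullback `g^*γ` of a `k`-form on `ℝⁿ` by a linear map `g`:
`(g^*γ)(v₁,…,v_k) = γ (g v₁, …, g v_k)`. -/
def formPullback {n k : ℕ} (g : (Fin n → ℝ) →ₗ[ℝ] (Fin n → ℝ))
    (γ : (Fin n → ℝ) [⋀^Fin k]→ₗ[ℝ] ℝ) : (Fin n → ℝ) [⋀^Fin k]→ₗ[ℝ] ℝ :=
  γ.compLinearMap g

/-- A `k`-form on `ℝⁿ` is stable if its `GL(n,ℝ)`-orbit (under pullback) is open in the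
space of all alternating `k`-forms. -/
def IsStableForm {n k : ℕ} (γ : (Fin n → ℝ) [⋀^Fin k]→ₗ[ℝ] ℝ) : Prop :=
  IsOpen {φ : (Fin n → ℝ) [⋀^Fin k]→ₗ[ℝ] ℝ |
    ∃ g : (Fin n → ℝ) ≃ₗ[ℝ] (Fin n → ℝ), φ = formPullback g.toLinearMap γ}

/-! The condition is Zariski open along lines: if `γ₀` is multi-symplectic and `π` is a left
inverse of `v ↦ ι_v γ₀`, then `v ↦ π (ι_v (γ + t (γ₀ - γ)))` is an endomorphism depending affinely
on `t`, so its determinant is a polynomial in `t`, nonzero at `t = 1`. Hence `γ + t (γ₀ - γ)` is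
multi-symplectic for all but finitely many `t`. The orbit of a stable `γ` is open, so it contains
such a point, and multi-symplecticity is invariant under `GL(n, ℝ)`. -/

open Polynomial in
theorem Matrix.finite_setOf_det_add_smul_eq_zero {ι K : Type*} [Fintype ι] [DecidableEq ι]
    [CommRing K] [IsDomain K] (M N : Matrix ι ι K) (h : ∃ s : K, (M + s • N).det ≠ 0) :
    {t : K | (M + t • N).det = 0}.Finite := by
  set P : K[X] := (M.map C + (X : K[X]) • N.map C).det
  have hP : ∀ t, P.eval t = (M + t • N).det := fun t => by
    rw [← coe_evalRingHom, RingHom.map_det]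
    congr 1
    ext i j
    simp
    ring
  obtain ⟨s, hs⟩ := h
  have hP0 : P ≠ 0 := fun h0 => hs (by rw [← hP, h0, eval_zero])
  simpa only [← hP, IsRoot.def] using finite_setOfPred_isRoot hP0

theorem LinearMap.injective_iff_det_ne_zero {K V : Type*} [Field K] [AddCommGroup V] [Module K V]
    [FiniteDimensional K V] (f : V →ₗ[K] V) : Function.Injective f ↔ f.det ≠ 0 := by
  rw [← ker_eq_bot, ← isUnit_iff_ker_eq_bot, isUnit_iff_isUnit_det, isUnit_iff_ne_zero]

theorem LinearMap.finite_setOf_not_injective_add_smul {K V : Type*} [Field K] [AddCommGroup V]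
    [Module K V] [FiniteDimensional K V] (A B : V →ₗ[K] V)
    (h : ∃ s : K, Function.Injective (A + s • B)) :
    {t : K | ¬ Function.Injective (A + t • B)}.Finite := by
  let b := Module.finBasis K V
  have hdet : ∀ t : K, (A + t • B).det = (toMatrix b b A + t • toMatrix b b B).det := fun t => by
    rw [← map_smul, ← map_add, det_toMatrix]
  simp only [injective_iff_det_ne_zero, hdet, not_not] at h ⊢
  exact Matrix.finite_setOf_det_add_smul_eq_zero _ _ h

theorem MultiSymplectic.of_compLinearEquiv {V W : Type*} [AddCommGroup V] [Module ℝ V]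
    [AddCommGroup W] [Module ℝ W] {k : ℕ} {γ : W [⋀^Fin (k + 1)]→ₗ[ℝ] ℝ} (g : V ≃ₗ[ℝ] W)
    (h : MultiSymplectic (γ.compLinearMap g.toLinearMap)) : MultiSymplectic γ := by
  intro v w hvw
  have : (γ.compLinearMap g.toLinearMap).curryLeft (g.symm v)
      = (γ.compLinearMap g.toLinearMap).curryLeft (g.symm w) := by
    simp only [AlternatingMap.curryLeft_compLinearMap, LinearEquiv.coe_coe,
      LinearEquiv.apply_symm_apply]
    exact congrArg (·.compLinearMap g.toLinearMap) hvw
  simpa using congrArg g (h this)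

theorem finite_setOf_not_multiSymplectic_add_smul {V : Type*} [AddCommGroup V] [Module ℝ V]
    [FiniteDimensional ℝ V] {k : ℕ} {γ δ : V [⋀^Fin (k + 1)]→ₗ[ℝ] ℝ}
    (h : ∃ s : ℝ, MultiSymplectic (γ + s • δ)) :
    {t : ℝ | ¬ MultiSymplectic (γ + t • δ)}.Finite := by
  obtain ⟨s, hs⟩ := h
  obtain ⟨π, hπ⟩ := LinearMap.exists_leftInverse_of_injective (γ + s • δ).curryLeft
    (LinearMap.ker_eq_bot.mpr hs)
  have hpencil : ∀ t : ℝ, π ∘ₗ (γ + t • δ).curryLeft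
      = π ∘ₗ γ.curryLeft + t • π ∘ₗ δ.curryLeft := fun t => by
    ext v
    simp
  refine (LinearMap.finite_setOf_not_injective_add_smul (π ∘ₗ γ.curryLeft) (π ∘ₗ δ.curryLeft)
    ⟨s, ?_⟩).subset fun t ht hinj => ht ?_
  · rw [← hpencil, hπ]
    exact Function.injective_id
  · rw [← hpencil] at hinj
    exact Function.Injective.of_comp hinj

theorem continuous_add_smul_altForm {n k : ℕ} (γ δ : (Fin n → ℝ) [⋀^Fin k]→ₗ[ℝ] ℝ) :
    Continuous fun t : ℝ => γ + t • δ := by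
  rw [continuous_induced_rng]
  refine continuous_pi fun v => ?_
  simp only [Function.comp_def, AlternatingMap.add_apply, AlternatingMap.smul_apply, smul_eq_mul]
  fun_prop

/-- If a multi-symplectic form exists on `ℝⁿ`, then every stable form is multi-symplectic. -/
theorem multiSymplectic_of_isStableForm (n k : ℕ)
    (h : ∃ γ₀ : (Fin n → ℝ) [⋀^Fin (k + 1)]→ₗ[ℝ] ℝ, MultiSymplectic γ₀)
    (γ : (Fin n → ℝ) [⋀^Fin (k + 1)]→ₗ[ℝ] ℝ) (hγ : IsStableForm γ) :
    MultiSymplectic γ := by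
  obtain ⟨γ₀, hγ₀⟩ := h
  have hbad : {t : ℝ | ¬ MultiSymplectic (γ + t • (γ₀ - γ))}.Finite :=
    finite_setOf_not_multiSymplectic_add_smul ⟨1, by simpa using hγ₀⟩
  have hopen := hγ.preimage (continuous_add_smul_altForm γ (γ₀ - γ))
  obtain ⟨t, ⟨g, hg : γ + t • (γ₀ - γ) = _⟩, ht⟩ :=
    (hbad.countable.dense_compl ℝ).inter_open_nonempty _ hopen
      ⟨0, LinearEquiv.refl ℝ _, by simp [formPullback]⟩
  have hpull : MultiSymplectic (formPullback g.toLinearMap γ) := hg ▸ not_not.mp ht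
  exact hpull.of_compLinearEquiv g
end
end

section
/- Let n and k be natural numbers with 4 ≤ k and 2k ≤ n. Then no alternating k-form on ℝ^n is stable, i.e., no k-form on ℝ^n has an open GL(n,ℝ)-orbit in the space of alternating k-forms. -/
noncomputable section

/-
If `γ` were stable, its orbit would be an open subset of the `C(n,k)`-dimensional space of
`k`-forms, hence of Hausdorff dimension `C(n,k)`. But the orbit is the image of `GL(n,ℝ)` under
the polynomial map `g ↦ g^*γ`, so its Hausdorff dimension is at most `n²`, and
`C(n,k) ≥ C(n,4) > n²` once `4 ≤ k ≤ n/2`.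
-/

open Module Set Topology

theorem MultilinearMap.apply_eq_sum_single {R ι η N : Type*} [CommSemiring R] [AddCommMonoid N]
    [Module R N] [Fintype ι] [Fintype η] [DecidableEq ι] [DecidableEq η]
    (f : MultilinearMap R (fun _ : ι => η → R) N) (v : ι → η → R) :
    f v = ∑ x : ι → η, (∏ i, v i (x i)) • f (fun i => Pi.single (x i) 1) := by
  have hv : v = fun i => ∑ j, v i j • (Pi.single j 1 : η → R) := by
    funext i
    simp only [← Pi.single_smul, smul_eq_mul, mul_one, Finset.univ_sum_single]
  conv_lhs => rw [hv, f.map_sum]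
  simp only [f.map_smul_univ]

theorem MultilinearMap.contDiff_of_pi {ι η : Type*} [Fintype ι] [Fintype η] [DecidableEq ι]
    [DecidableEq η] (f : MultilinearMap ℝ (fun _ : ι => η → ℝ) ℝ) : ContDiff ℝ ⊤ f := by
  rw [show ⇑f = fun v => ∑ x : ι → η, (∏ i, v i (x i)) • f (fun i => Pi.single (x i) 1) from
    funext f.apply_eq_sum_single]
  fun_prop

theorem AlternatingMap.finrank_eq_choose {K V : Type*} [Field K] [AddCommGroup V] [Module K V]
    [FiniteDimensional K V] (k : ℕ) :
    finrank K (V [⋀^Fin k]→ₗ[K] K) = (finrank K V).choose k := by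
  rw [exteriorPower.alternatingMapLinearEquiv.finrank_eq, Subspace.dual_finrank_eq,
    exteriorPower.finrank_eq]

theorem Nat.choose_four_le_choose {n k : ℕ} (hk : 4 ≤ k) (hn : 2 * k ≤ n) :
    n.choose 4 ≤ n.choose k := by
  induction k, hk using Nat.le_induction with
  | base => rfl
  | succ j _ ih => exact (ih (by omega)).trans (Nat.choose_le_succ_of_lt_half_left (by omega))

theorem Nat.sq_lt_choose_four {n : ℕ} (hn : 8 ≤ n) : n ^ 2 < n.choose 4 := by
  obtain ⟨m, rfl⟩ := Nat.exists_eq_add_of_le' hn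
  have h := Nat.descFactorial_eq_factorial_mul_choose (m + 8) 4
  simp only [Nat.descFactorial_succ, Nat.descFactorial_zero] at h
  rw [show m + 8 - 3 = m + 5 by omega, show m + 8 - 2 = m + 6 by omega] at h
  norm_num [Nat.factorial] at h
  have : 24 * (m + 8) ^ 2 < (m + 5) * ((m + 6) * ((m + 7) * (m + 8))) := by
    ring_nf; nlinarith [Nat.zero_le (m ^ 3), Nat.zero_le (m ^ 4)]
  linarith

theorem Submodule.finrank_le_of_inter_subset_range {E F : Type*} [NormedAddCommGroup E]
    [NormedSpace ℝ E] [FiniteDimensional ℝ E] [NormedAddCommGroup F] [NormedSpace ℝ F]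
    (L : Submodule ℝ F) [FiniteDimensional ℝ L] {U : Set F} (hU : IsOpen U)
    (hUL : (U ∩ L).Nonempty) {f : E → F} (hf : ContDiff ℝ 1 f) (hsub : U ∩ L ⊆ range f) :
    finrank ℝ L ≤ finrank ℝ E := by
  obtain ⟨w, hwU, hwL⟩ := hUL
  have hV : (↑) ⁻¹' U ∈ 𝓝 (⟨w, hwL⟩ : L) := (hU.preimage continuous_subtype_val).mem_nhds hwU
  have himage : ((↑) : L → F) '' ((↑) ⁻¹' U) = U ∩ L := by
    rw [image_preimage_eq_inter_range, Subtype.range_coe]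
  have hdim : (finrank ℝ L : ENNReal) ≤ finrank ℝ E := calc
    (finrank ℝ L : ENNReal) = dimH (U ∩ L) := by
      rw [← himage, isometry_subtype_coe.dimH_image, Real.dimH_of_mem_nhds hV]
    _ ≤ dimH (range f) := dimH_mono hsub
    _ ≤ finrank ℝ E := hf.dimH_range_le
  exact_mod_cast hdim

def evalBasis (n k : ℕ) :
    ((Fin n → ℝ) [⋀^Fin k]→ₗ[ℝ] ℝ) →ₗ[ℝ] (Fin k → Fin n) → ℝ where
  toFun φ x := φ (fun i => Pi.single (x i) 1)
  map_add' _ _ := rfl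
  map_smul' _ _ := rfl

theorem evalBasis_injective (n k : ℕ) : Function.Injective (evalBasis n k) := by
  intro φ ψ h
  refine (Pi.basisFun ℝ (Fin n)).ext_alternating fun x _ => ?_
  simp only [Pi.basisFun_apply]
  exact congrFun h x

/-- `altFormTopology` is induced by `⇑`, which factors continuously through `evalBasis` by
multilinear expansion. -/
theorem isInducing_evalBasis (n k : ℕ) : IsInducing (evalBasis n k) := by
  let expand : ((Fin k → Fin n) → ℝ) → (Fin k → Fin n → ℝ) → ℝ :=
    fun w v => ∑ x, (∏ i, v i (x i)) • w x
  have hcoe : expand ∘ evalBasis n k = fun φ : (Fin n → ℝ) [⋀^Fin k]→ₗ[ℝ] ℝ => ⇑φ :=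
    funext fun φ => (funext φ.toMultilinearMap.apply_eq_sum_single).symm
  have hcont : Continuous (evalBasis n k) := by
    refine continuous_pi fun x => ?_
    exact (continuous_apply (fun i => Pi.single (x i) 1)).comp continuous_induced_dom
  refine .of_comp (g := expand) hcont (by fun_prop) ?_
  rw [hcoe]
  exact ⟨rfl⟩

/-- The coordinates of `g^*γ`, as a function of the matrix of `g`. -/
def pullbackCoords {n k : ℕ} (γ : (Fin n → ℝ) [⋀^Fin k]→ₗ[ℝ] ℝ) (m : Fin n → Fin n → ℝ)
    (x : Fin k → Fin n) : ℝ :=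
  γ (fun i a => m a (x i))

theorem contDiff_pullbackCoords {n k : ℕ} (γ : (Fin n → ℝ) [⋀^Fin k]→ₗ[ℝ] ℝ) :
    ContDiff ℝ ⊤ (pullbackCoords γ) :=
  contDiff_pi.2 fun x => γ.toMultilinearMap.contDiff_of_pi.comp (by fun_prop)

def formOrbit {n k : ℕ} (γ : (Fin n → ℝ) [⋀^Fin k]→ₗ[ℝ] ℝ) :
    Set ((Fin n → ℝ) [⋀^Fin k]→ₗ[ℝ] ℝ) :=
  {φ | ∃ g : (Fin n → ℝ) ≃ₗ[ℝ] (Fin n → ℝ), φ = formPullback g.toLinearMap γ}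

theorem self_mem_formOrbit {n k : ℕ} (γ : (Fin n → ℝ) [⋀^Fin k]→ₗ[ℝ] ℝ) : γ ∈ formOrbit γ :=
  ⟨LinearEquiv.refl ℝ _, rfl⟩

theorem evalBasis_image_formOrbit_subset {n k : ℕ} (γ : (Fin n → ℝ) [⋀^Fin k]→ₗ[ℝ] ℝ) :
    evalBasis n k '' formOrbit γ ⊆ range (pullbackCoords γ) := by
  rintro _ ⟨_, ⟨g, rfl⟩, rfl⟩
  exact ⟨fun a b => g (Pi.single b 1) a, rfl⟩

theorem choose_le_sq_of_isStableForm {n k : ℕ} {γ : (Fin n → ℝ) [⋀^Fin k]→ₗ[ℝ] ℝ}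
    (hγ : IsStableForm γ) : n.choose k ≤ n ^ 2 := by
  obtain ⟨U, hU, hUγ⟩ := (isInducing_evalBasis n k).isOpen_iff.mp hγ
  have horbit : U ∩ LinearMap.range (evalBasis n k) = evalBasis n k '' formOrbit γ := by
    rw [LinearMap.coe_range, ← image_preimage_eq_inter_range, hUγ]; rfl
  have hle := (LinearMap.range (evalBasis n k)).finrank_le_of_inter_subset_range hU
    (horbit ▸ ⟨_, mem_image_of_mem _ (self_mem_formOrbit γ)⟩)
    ((contDiff_pullbackCoords γ).of_le le_top) (horbit ▸ evalBasis_image_formOrbit_subset γ)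
  rw [LinearMap.finrank_range_of_inj (evalBasis_injective n k),
    AlternatingMap.finrank_eq_choose] at hle
  simpa [finrank_pi_fintype, sq] using hle

/-- For `4 ≤ k` and `2k ≤ n`, no alternating `k`-form on `ℝⁿ` is stable. -/
theorem not_isStableForm_of_four_le (n k : ℕ) (hk : 4 ≤ k) (hn : 2 * k ≤ n)
    (γ : (Fin n → ℝ) [⋀^Fin k]→ₗ[ℝ] ℝ) : ¬ IsStableForm γ := fun hγ =>
  ((Nat.sq_lt_choose_four (by omega)).trans_le (Nat.choose_four_le_choose hk hn)).not_ge
    (choose_le_sq_of_isStableForm hγ)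
end
end
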